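/- arXiv:1910.09587 — 3 statements merged into one kernel-verified Lean document; each statement's English description precedes it below -/
import Mathlib

section
/- Let (z_t)_{t≥1} be a nonnegative real sequence satisfying z_{t+1} ≤ (1 - r₁(t)) z_t + r₂(t) for all large t, where r₁(t) = a₁/t^{δ₁} ∈ (0,1] with a₁ > 0, 0 ≤ δ₁ < 1, and r₂(t) ≤ a₂/t^{δ₂} with a₂ > 0, δ₂ > δ₁. Then for every δ₀ with 0 ≤ δ₀ < δ₂ - δ₁, t^{δ₀} z_t → 0 as t → ∞. -/
open Filter Finset

lemma chord_pow (n : ℕ) {x : ℝ} (hx0 : 0 ≤ x) (hx1 : x ≤ 1) :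
    (1 + x) ^ n ≤ 1 + ((2 : ℝ) ^ n - 1) * x := by
  induction n with
  | zero => simp
  | succ n ih =>
    have h2 : (1 : ℝ) ≤ 2 ^ n := one_le_pow₀ (by norm_num)
    have hxx : 0 ≤ ((2:ℝ) ^ n - 1) * x * (1 - x) :=
      mul_nonneg (mul_nonneg (by linarith) hx0) (by linarith)
    have h3 := pow_nonneg (by linarith : (0:ℝ) ≤ 1 + x) n
    rw [pow_succ, pow_succ]
    calc (1 + x) ^ n * (1 + x) ≤ (1 + ((2:ℝ) ^ n - 1) * x) * (1 + x) := by nlinarith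
      _ ≤ 1 + ((2:ℝ) ^ n * 2 - 1) * x := by nlinarith

lemma aux_contract (w α β : ℕ → ℝ) (hw : ∀ t, 0 ≤ w t)
    (hα : ∀ᶠ t in atTop, 0 < α t ∧ α t ≤ 1)
    (hdiv : Tendsto (fun n => ∑ i ∈ Finset.range n, α i) atTop atTop)
    (hratio : Tendsto (fun t => β t / α t) atTop (nhds 0))
    (hrec : ∀ᶠ t in atTop, w (t + 1) ≤ (1 - α t) * w t + β t) :
    Tendsto w atTop (nhds 0) := by
  have key : ∀ ε : ℝ, 0 < ε → ∀ᶠ t in atTop, w t < ε := by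
    intro ε hε
    have hsmall : ∀ᶠ t in atTop, β t ≤ ε / 2 * α t := by
      have h1 : ∀ᶠ t in atTop, β t / α t < ε / 2 :=
        hratio.eventually_lt_const (by linarith)
      filter_upwards [h1, hα] with t ht ⟨htp, _⟩
      exact le_of_lt ((div_lt_iff₀ htp).mp ht)
    obtain ⟨T, hT⟩ := eventually_atTop.mp (hsmall.and (hα.and hrec))
    set u : ℕ → ℝ := fun t => max (w t - ε / 2) 0 with hu
    have hu0 : ∀ t, 0 ≤ u t := fun t => le_max_right _ _
    have hstep : ∀ t, T ≤ t → u (t + 1) ≤ (1 - α t) * u t := by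
      intro t ht
      obtain ⟨hs, ⟨hαp, hα1⟩, hr⟩ := hT t ht
      have h1α : 0 ≤ 1 - α t := by linarith
      have h2 : w (t + 1) - ε / 2 ≤ (1 - α t) * (w t - ε / 2) := by nlinarith
      have h3 : (1 - α t) * (w t - ε / 2) ≤ (1 - α t) * u t :=
        mul_le_mul_of_nonneg_left (le_max_left _ _) h1α
      exact max_le (h2.trans h3) (mul_nonneg h1α (hu0 t))
    have hexp : ∀ k : ℕ, u (T + k) ≤ Real.exp (-(∑ i ∈ Finset.range k, α (T + i))) * u T := by
      intro k
      induction k with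
      | zero => simp
      | succ k ih =>
        have h1 : u (T + (k + 1)) ≤ (1 - α (T + k)) * u (T + k) := by
          have := hstep (T + k) (Nat.le_add_right _ _)
          simpa [Nat.add_assoc] using this
        have h2 : (1 - α (T + k)) * u (T + k) ≤ Real.exp (-(α (T + k))) * u (T + k) := by
          apply mul_le_mul_of_nonneg_right _ (hu0 _)
          have := Real.add_one_le_exp (-(α (T + k)))
          linarith
        have h3 : Real.exp (-(α (T + k))) * u (T + k) ≤
            Real.exp (-(α (T + k))) * (Real.exp (-(∑ i ∈ Finset.range k, α (T + i))) * u T) :=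
          mul_le_mul_of_nonneg_left ih (Real.exp_nonneg _)
        calc u (T + (k + 1)) ≤ (1 - α (T + k)) * u (T + k) := h1
          _ ≤ Real.exp (-(α (T + k))) * u (T + k) := h2
          _ ≤ Real.exp (-(α (T + k))) * (Real.exp (-(∑ i ∈ Finset.range k, α (T + i))) * u T) := h3
          _ = Real.exp (-(∑ i ∈ Finset.range (k + 1), α (T + i))) * u T := by
              rw [Finset.sum_range_succ, neg_add, Real.exp_add]; ring
    have hsum : Tendsto (fun k : ℕ => ∑ i ∈ Finset.range k, α (T + i)) atTop atTop := by
      have h1 : ∀ k : ℕ, ∑ i ∈ Finset.range k, α (T + i)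
          = ∑ i ∈ Finset.range (T + k), α i - ∑ i ∈ Finset.range T, α i := by
        intro k; rw [Finset.sum_range_add]; ring
      have h2 : Tendsto (fun k : ℕ => ∑ i ∈ Finset.range (T + k), α i) atTop atTop :=
        hdiv.comp (tendsto_add_atTop_nat T |>.comp tendsto_id |>.congr (fun k => by simp [Nat.add_comm]))
      simpa [h1, sub_eq_add_neg] using h2.atTop_add tendsto_const_nhds
    have hbound : Tendsto (fun k : ℕ => Real.exp (-(∑ i ∈ Finset.range k, α (T + i))) * u T)
        atTop (nhds 0) := by
      have := (Real.tendsto_exp_neg_atTop_nhds_zero.comp hsum).mul_const (u T)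
      simpa using this
    have huT : Tendsto (fun k : ℕ => u (T + k)) atTop (nhds 0) :=
      squeeze_zero (fun k => hu0 _) hexp hbound
    have hu_tendsto : Tendsto u atTop (nhds 0) := by
      rw [← tendsto_add_atTop_iff_nat T]
      exact huT.congr fun k => by rw [Nat.add_comm]
    have : ∀ᶠ t in atTop, u t < ε / 2 := hu_tendsto.eventually_lt_const (by linarith)
    filter_upwards [this] with t ht
    have : w t - ε / 2 ≤ u t := le_max_left _ _
    linarith
  rw [tendsto_order]
  refine ⟨fun a ha => Eventually.of_forall fun t => lt_of_lt_of_le ha (hw t), fun a ha => key a ha⟩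

theorem stmt_7 (z r₁ r₂ : ℕ → ℝ) (a₁ a₂ δ₁ δ₂ : ℝ)
    (hz : ∀ t, 0 ≤ z t)
    (ha₁ : 0 < a₁) (hδ₁0 : 0 ≤ δ₁) (hδ₁1 : δ₁ < 1)
    (ha₂ : 0 < a₂) (hδ₂ : δ₁ < δ₂)
    (hr₁ : ∀ t : ℕ, 1 ≤ t → r₁ t = a₁ / (t : ℝ) ^ δ₁ ∧ r₁ t ∈ Set.Ioc (0 : ℝ) 1)
    (hr₂ : ∀ t : ℕ, 1 ≤ t → r₂ t ≤ a₂ / (t : ℝ) ^ δ₂)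
    (hrec : ∃ T : ℕ, ∀ t ≥ T, z (t + 1) ≤ (1 - r₁ t) * z t + r₂ t) :
    ∀ δ₀ : ℝ, 0 ≤ δ₀ → δ₀ < δ₂ - δ₁ →
      Tendsto (fun t : ℕ => (t : ℝ) ^ δ₀ * z t) atTop (nhds 0) := by
  intro δ₀ hδ₀0 hδ₀
  obtain ⟨T, hT⟩ := hrec
  set n := ⌈δ₀⌉₊ with hn
  set α : ℕ → ℝ := fun t => a₁ / 2 * ((t : ℝ) ^ δ₁)⁻¹ with hα_def
  set β : ℕ → ℝ := fun t => 2 ^ δ₀ * a₂ * (t : ℝ) ^ (δ₀ - δ₂) with hβ_def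
  have hw : ∀ t : ℕ, 0 ≤ (t : ℝ) ^ δ₀ * z t :=
    fun t => mul_nonneg (Real.rpow_nonneg (Nat.cast_nonneg t) _) (hz t)
  apply aux_contract _ α β hw
  · -- 0 < α t ∧ α t ≤ 1 eventually
    filter_upwards [eventually_ge_atTop 1] with t ht
    have htpos : (0:ℝ) < t := by exact_mod_cast Nat.lt_of_lt_of_le Nat.zero_lt_one ht
    have hp : (0:ℝ) < (t:ℝ) ^ δ₁ := Real.rpow_pos_of_pos htpos _
    obtain ⟨hr₁eq, hIoc⟩ := hr₁ t ht
    have hle1 : a₁ / (t:ℝ) ^ δ₁ ≤ 1 := hr₁eq ▸ hIoc.2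
    constructor
    · positivity
    · have : α t = a₁ / (t:ℝ) ^ δ₁ / 2 := by simp [hα_def]; ring
      rw [this]; linarith
  · -- divergence of partial sums of α
    have hns : ¬ Summable (fun t : ℕ => α t) := by
      intro h
      have h2 : Summable (fun t : ℕ => ((t : ℝ) ^ δ₁)⁻¹) := by
        refine (h.mul_left (2 / a₁)).congr fun t => ?_
        simp only [hα_def]
        rcases eq_or_ne (((t:ℕ):ℝ) ^ δ₁) 0 with h0 | h0
        · simp [h0]
        · field_simp
      have := Real.summable_nat_rpow_inv.mp h2
      linarith
    exact (not_summable_iff_tendsto_nat_atTop_of_nonneg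
      (fun t => by simp only [hα_def]; positivity)).mp hns
  · -- ratio β/α → 0
    have h0 : Tendsto (fun x : ℝ => x ^ (δ₀ - δ₂ + δ₁)) atTop (nhds 0) := by
      have := tendsto_rpow_neg_atTop (show (0:ℝ) < -(δ₀ - δ₂ + δ₁) by linarith)
      simpa using this
    have h1 : Tendsto (fun t : ℕ => 2 ^ δ₀ * a₂ * 2 / a₁ * (t : ℝ) ^ (δ₀ - δ₂ + δ₁))
        atTop (nhds 0) := by
      have := (h0.comp tendsto_natCast_atTop_atTop).const_mul (2 ^ δ₀ * a₂ * 2 / a₁)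
      simpa [Function.comp] using this
    refine h1.congr' ?_
    filter_upwards [eventually_ge_atTop 1] with t ht
    have htpos : (0:ℝ) < t := by exact_mod_cast Nat.lt_of_lt_of_le Nat.zero_lt_one ht
    have hp : (0:ℝ) < (t:ℝ) ^ δ₁ := Real.rpow_pos_of_pos htpos _
    simp only [hα_def, hβ_def]
    rw [Real.rpow_add htpos]
    field_simp
  · -- the recursion for w
    have hE : ∀ᶠ t : ℕ in atTop, ((2:ℝ) ^ n - 1) * (t : ℝ) ^ (δ₁ - 1) ≤ a₁ / 2 := by
      have h0 : Tendsto (fun x : ℝ => x ^ (δ₁ - 1)) atTop (nhds 0) := by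
        have := tendsto_rpow_neg_atTop (show (0:ℝ) < 1 - δ₁ by linarith)
        simpa [neg_sub] using this
      have h1 : Tendsto (fun t : ℕ => ((2:ℝ) ^ n - 1) * (t : ℝ) ^ (δ₁ - 1)) atTop (nhds 0) := by
        have := (h0.comp tendsto_natCast_atTop_atTop).const_mul ((2:ℝ) ^ n - 1)
        simpa [Function.comp, mul_comm] using this
      exact (h1.eventually_lt_const (by linarith : (0:ℝ) < a₁ / 2)).mono fun t h => le_of_lt h
    filter_upwards [eventually_ge_atTop (max T 1), hE] with t htm hEt
    have htT : T ≤ t := le_trans (le_max_left _ _) htm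
    have ht1 : 1 ≤ t := le_trans (le_max_right _ _) htm
    have hs1 : (1:ℝ) ≤ (t:ℝ) := by exact_mod_cast ht1
    set s : ℝ := (t : ℝ) with hs_def
    have htpos : (0:ℝ) < s := by linarith
    have hsδ₁ : (0:ℝ) < s ^ δ₁ := Real.rpow_pos_of_pos htpos _
    have hsδ₂ : (0:ℝ) < s ^ δ₂ := Real.rpow_pos_of_pos htpos _
    have hsδ₀ : (0:ℝ) ≤ s ^ δ₀ := Real.rpow_nonneg (le_of_lt htpos) _
    obtain ⟨hr₁eq, hIoc⟩ := hr₁ t ht1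
    have hr₁pos : 0 < r₁ t := hIoc.1
    have hr₁le : r₁ t ≤ 1 := hIoc.2
    have hr₂t := hr₂ t ht1
    have hrect := hT t htT
    have hcast : ((t + 1 : ℕ) : ℝ) = s + 1 := by push_cast; ring
    have hs1pos : (0:ℝ) < s + 1 := by linarith
    have hs1δ₀ : (0:ℝ) ≤ (s + 1) ^ δ₀ := Real.rpow_nonneg (le_of_lt hs1pos) _
    -- q = ((s+1)/s)^δ₀
    set q : ℝ := ((s + 1) / s) ^ δ₀ with hq_def
    have hq1 : 1 ≤ q := by
      have h := Real.rpow_le_rpow (by norm_num : (0:ℝ) ≤ 1)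
        ((le_div_iff₀ htpos).mpr (by linarith : 1 * s ≤ s + 1)) hδ₀0
      simpa using h
    have hqsplit : (s + 1) ^ δ₀ = q * s ^ δ₀ := by
      rw [hq_def, ← Real.mul_rpow (by positivity) (le_of_lt htpos),
        div_mul_cancel₀ _ (ne_of_gt htpos)]
    -- q ≤ 1 + α t
    have hαval : α t = a₁ / 2 * (s ^ δ₁)⁻¹ := rfl
    have hq2 : q ≤ 1 + α t := by
      have hx0 : (0:ℝ) ≤ 1 / s := by positivity
      have hx1 : 1 / s ≤ 1 := by rw [div_le_one htpos]; linarith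
      have e1 : (s + 1) / s = 1 + 1 / s := by field_simp
      have e2 : q ≤ (1 + 1 / s) ^ n := by
        rw [hq_def, e1, ← Real.rpow_natCast (1 + 1/s) n]
        exact Real.rpow_le_rpow_of_exponent_le (by linarith) (Nat.le_ceil δ₀)
      have e3 : (1 + 1 / s) ^ n ≤ 1 + ((2:ℝ) ^ n - 1) * (1 / s) := chord_pow n hx0 hx1
      have e4 : ((2:ℝ) ^ n - 1) * (1 / s) ≤ a₁ / 2 * (s ^ δ₁)⁻¹ := by
        have hP : (0:ℝ) ≤ (2:ℝ) ^ n - 1 := by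
          have : (1:ℝ) ≤ 2 ^ n := one_le_pow₀ (by norm_num)
          linarith
        have h5 : ((2:ℝ) ^ n - 1) * (s ^ δ₁ / s) ≤ a₁ / 2 := by
          rwa [Real.rpow_sub htpos, Real.rpow_one] at hEt
        have hs0 : s ≠ 0 := ne_of_gt htpos
        have h6 : ((2:ℝ) ^ n - 1) * s ^ δ₁ ≤ a₁ / 2 * s := by
          have h := mul_le_mul_of_nonneg_right h5 (le_of_lt htpos)
          field_simp at h
          linarith
        have h7 : ((2:ℝ) ^ n - 1) / s ≤ (a₁ / 2) / s ^ δ₁ :=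
          (div_le_div_iff₀ htpos hsδ₁).mpr (by linarith)
        rw [mul_one_div, ← div_eq_mul_inv]
        exact h7
      calc q ≤ (1 + 1 / s) ^ n := e2
        _ ≤ 1 + ((2:ℝ) ^ n - 1) * (1 / s) := e3
        _ ≤ 1 + a₁ / 2 * (s ^ δ₁)⁻¹ := by linarith
        _ = 1 + α t := by rw [hαval]
    have hαr : α t = r₁ t / 2 := by rw [hαval, hr₁eq]; ring
    have hc2 : (1 - r₁ t) * q ≤ 1 - α t := by
      have hrq : r₁ t * 1 ≤ r₁ t * q := mul_le_mul_of_nonneg_left hq1 (le_of_lt hr₁pos)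
      nlinarith
    have hc1 : 0 ≤ (1 - r₁ t) * q := mul_nonneg (by linarith) (by linarith)
    -- term 1
    have hterm1 : (1 - r₁ t) * ((s + 1) ^ δ₀ * z t) ≤ (1 - α t) * (s ^ δ₀ * z t) := by
      rw [hqsplit]
      calc (1 - r₁ t) * (q * s ^ δ₀ * z t) = ((1 - r₁ t) * q) * (s ^ δ₀ * z t) := by ring
        _ ≤ (1 - α t) * (s ^ δ₀ * z t) :=
            mul_le_mul_of_nonneg_right hc2 (mul_nonneg hsδ₀ (hz t))
    -- term 2
    have hterm2 : (s + 1) ^ δ₀ * r₂ t ≤ β t := by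
      have e1 : (s + 1) ^ δ₀ * r₂ t ≤ (s + 1) ^ δ₀ * (a₂ / s ^ δ₂) :=
        mul_le_mul_of_nonneg_left hr₂t hs1δ₀
      have e2 : (s + 1) ^ δ₀ ≤ 2 ^ δ₀ * s ^ δ₀ := by
        rw [← Real.mul_rpow (by norm_num) (le_of_lt htpos)]
        exact Real.rpow_le_rpow (le_of_lt hs1pos) (by linarith) hδ₀0
      have e3 : (s + 1) ^ δ₀ * (a₂ / s ^ δ₂) ≤ 2 ^ δ₀ * s ^ δ₀ * (a₂ / s ^ δ₂) :=
        mul_le_mul_of_nonneg_right e2 (by positivity)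
      have e4 : 2 ^ δ₀ * s ^ δ₀ * (a₂ / s ^ δ₂) = β t := by
        show _ = 2 ^ δ₀ * a₂ * s ^ (δ₀ - δ₂)
        rw [Real.rpow_sub htpos]
        field_simp
      linarith
    calc ((t + 1 : ℕ) : ℝ) ^ δ₀ * z (t + 1) = (s + 1) ^ δ₀ * z (t + 1) := by rw [hcast]
      _ ≤ (s + 1) ^ δ₀ * ((1 - r₁ t) * z t + r₂ t) :=
          mul_le_mul_of_nonneg_left hrect hs1δ₀
      _ = (1 - r₁ t) * ((s + 1) ^ δ₀ * z t) + (s + 1) ^ δ₀ * r₂ t := by ring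
      _ ≤ (1 - α t) * (s ^ δ₀ * z t) + β t := add_le_add hterm1 hterm2
end

section
/- Let U : ℝ^d → ℝ be continuous, coercive (U(x) → ∞ as ‖x‖ → ∞), with min U = 0, and let S = argmin U. For ε > 0, define the probability measure π^ε with density proportional to exp(-2U(x)/ε²) on ℝ^d (assuming the normalizing constant Z^ε = ∫ exp(-2U(x)/ε²) dx is finite for all small ε > 0). Then for every open set O containing S and every δ > 0, there exists ε₀ > 0 such that π^ε(O) ≥ 1 - δ for all 0 < ε < ε₀. -/
open MeasureTheory Filter

theorem stmt_12 {d : ℕ} (U : EuclideanSpace ℝ (Fin d) → ℝ)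
    (hcont : Continuous U)
    (hcoercive : Tendsto U (cocompact (EuclideanSpace ℝ (Fin d))) atTop)
    (hnonneg : ∀ x, 0 ≤ U x) (hmin : ∃ x, U x = 0)
    (hZ : ∃ ε₁ : ℝ, 0 < ε₁ ∧ ∀ ε : ℝ, 0 < ε → ε < ε₁ →
      (∫⁻ x, ENNReal.ofReal (Real.exp (-(2 * U x) / ε ^ 2)) ∂volume) < ⊤) :
    ∀ O : Set (EuclideanSpace ℝ (Fin d)), IsOpen O → {x | U x = 0} ⊆ O →
      ∀ δ : ℝ, 0 < δ → ∃ ε₀ : ℝ, 0 < ε₀ ∧ ∀ ε : ℝ, 0 < ε → ε < ε₀ →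
        1 - δ ≤
          ((volume.withDensity fun x =>
              ENNReal.ofReal (Real.exp (-(2 * U x) / ε ^ 2))) O).toReal /
            (∫⁻ x, ENNReal.ofReal (Real.exp (-(2 * U x) / ε ^ 2)) ∂volume).toReal := by
  obtain ⟨ε₁, hε₁, hZfin⟩ := hZ
  intro O hO hSO δ hδ
  have hUmeas : Measurable U := hcont.measurable
  -- measurable density for any ε
  have hfm : ∀ ε : ℝ, Measurable (fun x => ENNReal.ofReal (Real.exp (-(2 * U x) / ε ^ 2))) := by
    intro ε
    exact (((measurable_const.mul hUmeas).neg.div_const _).exp).ennreal_ofReal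
  -- compact set outside which U ≥ 1
  have h1 : {x | 1 ≤ U x} ∈ cocompact (EuclideanSpace ℝ (Fin d)) :=
    hcoercive (eventually_ge_atTop 1)
  obtain ⟨K, hK, hKsub⟩ := mem_cocompact.mp h1
  -- positive lower bound for U off O
  obtain ⟨m, hm, hmO⟩ : ∃ m : ℝ, 0 < m ∧ ∀ x ∉ O, m ≤ U x := by
    by_cases hne : (Oᶜ ∩ K).Nonempty
    · obtain ⟨z, hz, hzmin⟩ :=
        (hK.inter_left hO.isClosed_compl).exists_isMinOn hne hcont.continuousOn
      have hzO : z ∉ O := hz.1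
      have hUz : 0 < U z := by
        rcases lt_or_eq_of_le (hnonneg z) with h | h
        · exact h
        · exact absurd (hSO (show U z = 0 from h.symm)) hzO
      refine ⟨min (U z) 1, by positivity, fun x hx => ?_⟩
      by_cases hxK : x ∈ K
      · exact le_trans (min_le_left _ _) (hzmin ⟨hx, hxK⟩)
      · exact le_trans (min_le_right _ _) (hKsub hxK)
    · refine ⟨1, one_pos, fun x hx => ?_⟩
      by_cases hxK : x ∈ K
      · exact absurd ⟨x, hx, hxK⟩ hne
      · exact hKsub hxK
  -- small ball around a minimizer where 2U ≤ m
  obtain ⟨x₀, hx₀⟩ := hmin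
  obtain ⟨r, hr, hball⟩ : ∃ r > 0, ∀ x ∈ Metric.ball x₀ r, 2 * U x ≤ m := by
    obtain ⟨r, hr, hlt⟩ := Metric.continuousAt_iff.mp hcont.continuousAt (ε := m / 2)
      (by positivity)
    refine ⟨r, hr, fun x hx => ?_⟩
    have := hlt (Metric.mem_ball.mp hx)
    rw [Real.dist_eq, hx₀, sub_zero, abs_of_nonneg (hnonneg x)] at this
    linarith
  set B := Metric.ball x₀ r with hB
  have hvolB_pos : 0 < volume B := Metric.measure_ball_pos volume x₀ hr
  have hvolB_fin : volume B < ⊤ := measure_ball_lt_top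
  set v : ℝ := (volume B).toReal with hv
  have hv0 : 0 < v := ENNReal.toReal_pos hvolB_pos.ne' hvolB_fin.ne
  -- fixed reference temperature
  set ε₂ : ℝ := ε₁ / 2 with hε₂def
  have hε₂ : 0 < ε₂ := by positivity
  have hε₂lt : ε₂ < ε₁ := by simp [hε₂def]; linarith
  set Z₂ : ENNReal := ∫⁻ x, ENNReal.ofReal (Real.exp (-(2 * U x) / ε₂ ^ 2)) ∂volume with hZ₂def
  have hZ₂fin : Z₂ < ⊤ := hZfin ε₂ hε₂ hε₂lt
  set z₂ : ℝ := Z₂.toReal with hz₂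
  have hz₂0 : 0 ≤ z₂ := ENNReal.toReal_nonneg
  set Kc : ℝ := Real.exp (2 * m / ε₂ ^ 2) * z₂ with hKc
  have hKc0 : 0 ≤ Kc := by positivity
  set c : ℝ := δ * v / (Kc + 1) with hc
  have hc0 : 0 < c := by positivity
  -- choose ε₀ via the limit exp(-m/ε²) → 0
  have htend : Tendsto (fun ε : ℝ => Real.exp (-m / ε ^ 2)) (nhdsWithin 0 (Set.Ioi 0))
      (nhds 0) := by
    apply Real.tendsto_exp_atBot.comp
    have h2 : Tendsto (fun ε : ℝ => ε ^ 2) (nhdsWithin 0 (Set.Ioi 0))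
        (nhdsWithin 0 (Set.Ioi 0)) := by
      apply tendsto_nhdsWithin_of_tendsto_nhds_of_eventually_within
      · exact ((continuous_pow 2).tendsto' 0 0 (by simp)).mono_left nhdsWithin_le_nhds
      · filter_upwards [self_mem_nhdsWithin] with x hx; exact pow_pos (Set.mem_Ioi.mp hx) 2
    have h3 : Tendsto (fun t : ℝ => -m / t) (nhdsWithin 0 (Set.Ioi 0)) atBot := by
      have h4 := (tendsto_inv_nhdsGT_zero (𝕜 := ℝ)).const_mul_atTop hm
      have h5 := tendsto_neg_atTop_atBot.comp h4
      refine h5.congr fun t => ?_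
      simp [Function.comp, neg_div, div_eq_mul_inv]
    exact h3.comp h2
  obtain ⟨u, hu, husub⟩ := mem_nhdsGT_iff_exists_Ioo_subset.mp
    (htend.eventually (gt_mem_nhds hc0))
  refine ⟨min u ε₂, lt_min hu hε₂, fun ε hε hεlt => ?_⟩
  have hεu : ε < u := hεlt.trans_le (min_le_left _ _)
  have hεε₂ : ε < ε₂ := hεlt.trans_le (min_le_right _ _)
  have hεε₁ : ε < ε₁ := hεε₂.trans hε₂lt
  have hexp_lt : Real.exp (-m / ε ^ 2) < c := husub ⟨hε, hεu⟩
  set f : EuclideanSpace ℝ (Fin d) → ENNReal :=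
    fun x => ENNReal.ofReal (Real.exp (-(2 * U x) / ε ^ 2)) with hf
  set Z : ENNReal := ∫⁻ x, f x ∂volume with hZdef
  have hZfin' : Z < ⊤ := hZfin ε hε hεε₁
  have hε2pos : (0:ℝ) < ε ^ 2 := by positivity
  -- lower bound on Z
  have hZlow : ENNReal.ofReal (Real.exp (-m / ε ^ 2)) * volume B ≤ Z := by
    calc ENNReal.ofReal (Real.exp (-m / ε ^ 2)) * volume B
        = ∫⁻ _ in B, ENNReal.ofReal (Real.exp (-m / ε ^ 2)) ∂volume := by
          rw [setLIntegral_const]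
      _ ≤ ∫⁻ x in B, f x ∂volume := by
          refine setLIntegral_mono (hfm ε) fun x hx => ?_
          refine ENNReal.ofReal_le_ofReal (Real.exp_le_exp.mpr ?_)
          have h2U := hball x hx
          gcongr
      _ ≤ Z := setLIntegral_le_lintegral _ _
  -- upper bound on mass outside O
  set a : ℝ := Real.exp (-(2 * m) * (1 / ε ^ 2 - 1 / ε₂ ^ 2)) with ha
  have hfactor : (0:ℝ) ≤ 1 / ε ^ 2 - 1 / ε₂ ^ 2 := by
    have : 1 / ε₂ ^ 2 ≤ 1 / ε ^ 2 := by
      apply one_div_le_one_div_of_le hε2pos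
      exact pow_le_pow_left₀ hε.le hεε₂.le 2
    linarith
  have hOc : ∫⁻ x in Oᶜ, f x ∂volume ≤ ENNReal.ofReal a * Z₂ := by
    have hpt : ∀ x ∈ Oᶜ, f x ≤
        ENNReal.ofReal a * ENNReal.ofReal (Real.exp (-(2 * U x) / ε₂ ^ 2)) := by
      intro x hx
      rw [← ENNReal.ofReal_mul (Real.exp_nonneg _), ← Real.exp_add]
      refine ENNReal.ofReal_le_ofReal (Real.exp_le_exp.mpr ?_)
      have hUx : m ≤ U x := hmO x hx
      have key : -(2 * U x) * (1 / ε ^ 2 - 1 / ε₂ ^ 2) ≤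
          -(2 * m) * (1 / ε ^ 2 - 1 / ε₂ ^ 2) := by
        apply mul_le_mul_of_nonneg_right (by linarith) hfactor
      have expand : -(2 * U x) / ε ^ 2 =
          -(2 * U x) * (1 / ε ^ 2 - 1 / ε₂ ^ 2) + -(2 * U x) / ε₂ ^ 2 := by
        field_simp
        ring
      rw [expand]
      linarith
    calc ∫⁻ x in Oᶜ, f x ∂volume
        ≤ ∫⁻ x in Oᶜ, ENNReal.ofReal a *
            ENNReal.ofReal (Real.exp (-(2 * U x) / ε₂ ^ 2)) ∂volume :=
          setLIntegral_mono (measurable_const.mul (hfm ε₂)) hpt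
      _ = ENNReal.ofReal a *
            ∫⁻ x in Oᶜ, ENNReal.ofReal (Real.exp (-(2 * U x) / ε₂ ^ 2)) ∂volume :=
          lintegral_const_mul _ (hfm ε₂)
      _ ≤ ENNReal.ofReal a * Z₂ :=
          mul_le_mul_right (setLIntegral_le_lintegral _ _) _
  -- the key comparison
  have hkey : ∫⁻ x in Oᶜ, f x ∂volume ≤ ENNReal.ofReal δ * Z := by
    refine hOc.trans (le_trans ?_ (mul_le_mul_right hZlow _))
    rw [← ENNReal.ofReal_toReal hZ₂fin.ne, ← ENNReal.ofReal_toReal hvolB_fin.ne,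
      ← ENNReal.ofReal_mul (Real.exp_nonneg _), ← ENNReal.ofReal_mul (Real.exp_nonneg _),
      ← ENNReal.ofReal_mul hδ.le]
    refine ENNReal.ofReal_le_ofReal ?_
    -- real inequality: a * z₂ ≤ δ * (exp(-m/ε²) * v)
    have hsplit : a = Real.exp (-m / ε ^ 2) * (Real.exp (-m / ε ^ 2) *
        Real.exp (2 * m / ε₂ ^ 2)) := by
      rw [ha, ← Real.exp_add, ← Real.exp_add]
      congr 1
      have hε0 : ε ≠ 0 := hε.ne'
      have hε₂0 : ε₂ ≠ 0 := hε₂.ne'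
      field_simp
      ring
    have hb0 : (0:ℝ) ≤ Real.exp (-m / ε ^ 2) := Real.exp_nonneg _
    have h6 : Real.exp (-m / ε ^ 2) * Kc ≤ c * (Kc + 1) := by
      have := mul_le_mul_of_nonneg_right hexp_lt.le hKc0
      nlinarith
    have h7 : c * (Kc + 1) = δ * v := by
      rw [hc]; field_simp
    have : a * z₂ = Real.exp (-m / ε ^ 2) * (Real.exp (-m / ε ^ 2) * Kc) := by
      rw [hsplit, hKc]; ring
    rw [this]
    have h8 : Real.exp (-m / ε ^ 2) * Kc ≤ δ * v := by rw [← h7]; exact h6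
    calc Real.exp (-m / ε ^ 2) * (Real.exp (-m / ε ^ 2) * Kc)
        ≤ Real.exp (-m / ε ^ 2) * (δ * v) := by
          apply mul_le_mul_of_nonneg_left h8 hb0
      _ = δ * (Real.exp (-m / ε ^ 2) * v) := by ring
  -- conclude
  have hZpos : 0 < Z :=
    lt_of_lt_of_le
      (ENNReal.mul_pos (ENNReal.ofReal_pos.mpr (Real.exp_pos _)).ne' hvolB_pos.ne') hZlow
  have hsum : (∫⁻ x in O, f x ∂volume) + (∫⁻ x in Oᶜ, f x ∂volume) = Z :=
    lintegral_add_compl f hO.measurableSet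
  have hOfin : (∫⁻ x in O, f x ∂volume) ≠ ⊤ := by
    refine ne_top_of_le_ne_top hZfin'.ne ?_
    rw [← hsum]; exact le_self_add
  have hOcfin : (∫⁻ x in Oᶜ, f x ∂volume) ≠ ⊤ := by
    refine ne_top_of_le_ne_top hZfin'.ne ?_
    rw [← hsum]; exact le_add_self
  have hμO : (volume.withDensity f) O = ∫⁻ x in O, f x ∂volume :=
    withDensity_apply f hO.measurableSet
  set A : ℝ := (∫⁻ x in O, f x ∂volume).toReal with hA
  set Bc : ℝ := (∫⁻ x in Oᶜ, f x ∂volume).toReal with hBc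
  set ZT : ℝ := Z.toReal with hZT
  have hZT0 : 0 < ZT := ENNReal.toReal_pos hZpos.ne' hZfin'.ne
  have hsumR : A + Bc = ZT := by
    rw [hA, hBc, hZT, ← ENNReal.toReal_add hOfin hOcfin, hsum]
  have hBcle : Bc ≤ δ * ZT := by
    have := ENNReal.toReal_mono (by
      exact ENNReal.mul_ne_top ENNReal.ofReal_ne_top hZfin'.ne) hkey
    rwa [ENNReal.toReal_mul, ENNReal.toReal_ofReal hδ.le] at this
  rw [hμO]
  show 1 - δ ≤ A / ZT
  rw [le_div_iff₀ hZT0]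
  nlinarith
end

section
/- Suppose (z_t)_{t≥1} is a nonnegative real sequence satisfying, for all sufficiently large t, z_{t+1} ≤ (1 - b λ/t^{τ} + a K/t) z_t + C/t^{1-η}, where b, λ, a, K, C > 0, τ ∈ (0, 1/2), and η ∈ (1/2, 1 - τ). Then t^{τ₀} z_t → 0 for every τ₀ ∈ [0, 1 - η - τ). -/
set_option maxHeartbeats 1000000

open Filter

theorem stmt_19 (z : ℕ → ℝ) (hz : ∀ t, 0 ≤ z t)
    (b lam a K C τ η : ℝ)
    (hb : 0 < b) (hlam : 0 < lam) (ha : 0 < a) (hK : 0 < K) (hC : 0 < C)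
    (hτ : τ ∈ Set.Ioo (0 : ℝ) (1 / 2)) (hη : η ∈ Set.Ioo (1 / 2 : ℝ) (1 - τ))
    (hrec : ∃ T : ℕ, ∀ t ≥ T,
      z (t + 1) ≤ (1 - b * lam / (t : ℝ) ^ τ + a * K / t) * z t + C / (t : ℝ) ^ (1 - η)) :
    ∀ τ₀ : ℝ, 0 ≤ τ₀ → τ₀ < 1 - η - τ →
      Tendsto (fun t : ℕ => (t : ℝ) ^ τ₀ * z t) atTop (nhds 0) := by
  obtain ⟨T₀, hT₀⟩ := hrec
  intro τ₀ hτ₀ hτ₀'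
  set β : ℝ := 1 - η - τ with hβdef
  have hβ : 0 < β := lt_of_le_of_lt hτ₀ hτ₀'
  have hβ1 : β ≤ 1 := by
    have := hη.1; have := hτ.1; simp only [hβdef]; linarith
  have hblam : 0 < b * lam := mul_pos hb hlam
  have hτpos : 0 < τ := hτ.1
  have hτ1 : 0 < 1 - τ := by have := hτ.2; linarith
  -- eventual conditions
  have hnat : Tendsto (fun t : ℕ => (t : ℝ)) atTop atTop :=
    tendsto_natCast_atTop_atTop
  have hpow : ∀ p : ℝ, 0 < p → Tendsto (fun t : ℕ => (t : ℝ) ^ p) atTop atTop :=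
    fun p hp => (tendsto_rpow_atTop hp).comp hnat
  -- generic: A/t ≤ B/t^τ eventually
  have hgen : ∀ A B : ℝ, 0 < B → ∀ᶠ t : ℕ in atTop, A / (t : ℝ) ≤ B / (t : ℝ) ^ τ := by
    intro A B hB
    filter_upwards [(hpow (1 - τ) hτ1).eventually_ge_atTop (A / B),
      eventually_ge_atTop 1] with t h1 h2
    have ht0 : (0 : ℝ) < t := by exact_mod_cast h2
    have htτ : (0 : ℝ) < (t : ℝ) ^ τ := Real.rpow_pos_of_pos ht0 τ
    rw [div_le_div_iff₀ ht0 htτ]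
    have : A ≤ B * (t : ℝ) ^ (1 - τ) := by
      rw [← div_le_iff₀' hB]; exact h1
    calc A * (t : ℝ) ^ τ ≤ B * (t : ℝ) ^ (1 - τ) * (t : ℝ) ^ τ := by
          exact mul_le_mul_of_nonneg_right this htτ.le
      _ = B * (t : ℝ) := by
          rw [mul_assoc, ← Real.rpow_add ht0]; norm_num
  have hcond : ∀ᶠ t : ℕ in atTop,
      a * K / (t : ℝ) ≤ b * lam / 2 / (t : ℝ) ^ τ ∧
      b * lam / (t : ℝ) ^ τ ≤ 1 / 2 ∧
      β / (t : ℝ) ≤ b * lam / 4 / (t : ℝ) ^ τ ∧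
      1 ≤ t ∧ T₀ ≤ t := by
    have h3 : ∀ᶠ t : ℕ in atTop, b * lam / (t : ℝ) ^ τ ≤ 1 / 2 := by
      filter_upwards [(hpow τ hτpos).eventually_ge_atTop (2 * (b * lam)),
        eventually_ge_atTop 1] with t h1 h2
      have ht0 : (0 : ℝ) < t := by exact_mod_cast h2
      have htτ : (0 : ℝ) < (t : ℝ) ^ τ := Real.rpow_pos_of_pos ht0 τ
      rw [div_le_iff₀ htτ]; linarith
    filter_upwards [hgen (a * K) (b * lam / 2) (by linarith),
      hgen β (b * lam / 4) (by linarith), h3,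
      eventually_ge_atTop 1, eventually_ge_atTop T₀] with t h1 h2 h3 h4 h5
    exact ⟨h1, h3, h2, h4, h5⟩
  obtain ⟨T, hT⟩ := eventually_atTop.mp hcond
  obtain ⟨hc1, hc2, hc3, hc4, hc5⟩ := hT T le_rfl
  have hTpos : (0 : ℝ) < T := by exact_mod_cast hc4
  set M : ℝ := max (4 * C / (b * lam)) (z T * (T : ℝ) ^ β) with hMdef
  have hM0 : 0 < M := lt_of_lt_of_le (by positivity) (le_max_left _ _)
  have hMC : C ≤ b * lam / 4 * M := by
    have h := le_max_left (4 * C / (b * lam)) (z T * (T : ℝ) ^ β)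
    rw [div_le_iff₀ hblam] at h
    nlinarith
  -- key induction
  have key : ∀ t, T ≤ t → z t ≤ M / (t : ℝ) ^ β := by
    intro t ht
    induction t, ht using Nat.le_induction with
    | base =>
      have hTβ : (0 : ℝ) < (T : ℝ) ^ β := Real.rpow_pos_of_pos hTpos β
      rw [le_div_iff₀ hTβ]
      exact le_max_right _ _
    | succ t ht ih =>
      obtain ⟨h1, h2, h3, h4, _⟩ := hT t ht
      have ht0 : (0 : ℝ) < t := by exact_mod_cast h4
      have ht1 : (1 : ℝ) ≤ t := by exact_mod_cast h4
      have htτ : (0 : ℝ) < (t : ℝ) ^ τ := Real.rpow_pos_of_pos ht0 τ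
      have htβ : (0 : ℝ) < (t : ℝ) ^ β := Real.rpow_pos_of_pos ht0 β
      have hrect := hT₀ t (le_trans hc5 ht)
      have hcoef0 : 0 ≤ 1 - b * lam / (t : ℝ) ^ τ + a * K / t := by
        have : 0 ≤ a * K / (t : ℝ) := by positivity
        linarith
      have hcoef1 : 1 - b * lam / (t : ℝ) ^ τ + a * K / t ≤ 1 - b * lam / 2 / (t : ℝ) ^ τ := by
        have : b * lam / (t : ℝ) ^ τ = b * lam / 2 / (t : ℝ) ^ τ + b * lam / 2 / (t : ℝ) ^ τ := by
          ring
        linarith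
      have step1 : z (t + 1) ≤ (1 - b * lam / 2 / (t : ℝ) ^ τ) * (M / (t : ℝ) ^ β)
          + C / (t : ℝ) ^ (1 - η) := by
        refine le_trans hrect (add_le_add ?_ le_rfl)
        calc (1 - b * lam / (t : ℝ) ^ τ + a * K / t) * z t
            ≤ (1 - b * lam / (t : ℝ) ^ τ + a * K / t) * (M / (t : ℝ) ^ β) :=
              mul_le_mul_of_nonneg_left ih hcoef0
          _ ≤ (1 - b * lam / 2 / (t : ℝ) ^ τ) * (M / (t : ℝ) ^ β) :=
              mul_le_mul_of_nonneg_right hcoef1 (by positivity)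
      have hsplit : (t : ℝ) ^ (1 - η) = (t : ℝ) ^ β * (t : ℝ) ^ τ := by
        rw [← Real.rpow_add ht0, hβdef]; ring_nf
      have step2 : z (t + 1) ≤ M / (t : ℝ) ^ β - β / t * (M / (t : ℝ) ^ β) := by
        have hforce : C / (t : ℝ) ^ (1 - η) ≤ (b * lam / 4 / (t : ℝ) ^ τ) * (M / (t : ℝ) ^ β) := by
          have heq : b * lam / 4 / (t : ℝ) ^ τ * (M / (t : ℝ) ^ β)
              = (b * lam / 4 * M) / ((t : ℝ) ^ β * (t : ℝ) ^ τ) := by ring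
          rw [hsplit, heq]
          gcongr
        have h3' : β / t * (M / (t : ℝ) ^ β) ≤ b * lam / 4 / (t : ℝ) ^ τ * (M / (t : ℝ) ^ β) :=
          mul_le_mul_of_nonneg_right h3 (by positivity)
        have : (1 - b * lam / 2 / (t : ℝ) ^ τ) * (M / (t : ℝ) ^ β)
            = M / (t : ℝ) ^ β - (b * lam / 2 / (t : ℝ) ^ τ) * (M / (t : ℝ) ^ β) := by ring
        have hsum : b * lam / 4 / (t : ℝ) ^ τ * (M / (t : ℝ) ^ β)
            + b * lam / 4 / (t : ℝ) ^ τ * (M / (t : ℝ) ^ β)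
            = b * lam / 2 / (t : ℝ) ^ τ * (M / (t : ℝ) ^ β) := by ring
        linarith [step1]
      -- Bernoulli step
      have hfin : M / (t : ℝ) ^ β - β / t * (M / (t : ℝ) ^ β) ≤ M / ((t : ℝ) + 1) ^ β := by
        have hbern : ((t : ℝ) + 1) ^ β ≤ (t : ℝ) ^ β * (1 + β / t) := by
          have h1t : (t : ℝ) + 1 = t * (1 + 1 / t) := by field_simp
          rw [h1t, Real.mul_rpow ht0.le (by positivity)]
          refine mul_le_mul_of_nonneg_left ?_ htβ.le
          have h1t' : (0:ℝ) ≤ 1 / (t:ℝ) := by positivity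
          have hB := rpow_one_add_le_one_add_mul_self (s := 1 / (t:ℝ)) (by linarith) hβ.le hβ1
          rw [mul_one_div] at hB
          exact hB
        have ht1β : (0 : ℝ) < ((t : ℝ) + 1) ^ β := Real.rpow_pos_of_pos (by linarith) β
        have hβt : β / (t : ℝ) ≤ 1 := by
          rw [div_le_one ht0]; linarith
        have hkey : (1 - β / t) * ((t : ℝ) + 1) ^ β ≤ (t : ℝ) ^ β := by
          calc (1 - β / t) * ((t : ℝ) + 1) ^ β
              ≤ (1 - β / t) * ((t : ℝ) ^ β * (1 + β / t)) :=
                mul_le_mul_of_nonneg_left hbern (by linarith)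
            _ = (t : ℝ) ^ β * (1 - (β / t) ^ 2) := by ring
            _ ≤ (t : ℝ) ^ β := by nlinarith [sq_nonneg (β / (t : ℝ))]
        have : M / (t : ℝ) ^ β - β / t * (M / (t : ℝ) ^ β) = M * (1 - β / t) / (t : ℝ) ^ β := by
          ring
        rw [this, div_le_div_iff₀ htβ ht1β]
        calc M * (1 - β / t) * ((t : ℝ) + 1) ^ β = M * ((1 - β / t) * ((t : ℝ) + 1) ^ β) := by ring
          _ ≤ M * (t : ℝ) ^ β := mul_le_mul_of_nonneg_left hkey hM0.le
      have hcast : ((t + 1 : ℕ) : ℝ) = (t : ℝ) + 1 := by push_cast; ring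
      rw [hcast]
      exact le_trans step2 hfin
  -- squeeze
  have hlim : Tendsto (fun t : ℕ => M * (t : ℝ) ^ (τ₀ - β)) atTop (nhds 0) := by
    have h0 : Tendsto (fun t : ℕ => (t : ℝ) ^ (τ₀ - β)) atTop (nhds 0) := by
      have : τ₀ - β = -(β - τ₀) := by ring
      rw [this]
      exact (tendsto_rpow_neg_atTop (by linarith)).comp hnat
    simpa using h0.const_mul M
  apply squeeze_zero' (g := fun t : ℕ => M * (t : ℝ) ^ (τ₀ - β)) ?_ ?_ hlim
  · filter_upwards [eventually_ge_atTop 1] with t h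
    exact mul_nonneg (Real.rpow_nonneg (by positivity) _) (hz t)
  · filter_upwards [eventually_ge_atTop T, eventually_ge_atTop 1] with t h h1
    have ht0 : (0 : ℝ) < t := by exact_mod_cast h1
    have := key t h
    have hsub : (t : ℝ) ^ (τ₀ - β) = (t : ℝ) ^ τ₀ / (t : ℝ) ^ β := Real.rpow_sub ht0 τ₀ β
    rw [hsub]
    have htβ : (0 : ℝ) < (t : ℝ) ^ β := Real.rpow_pos_of_pos ht0 β
    have htτ₀ : (0 : ℝ) ≤ (t : ℝ) ^ τ₀ := (Real.rpow_pos_of_pos ht0 τ₀).le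
    calc (t : ℝ) ^ τ₀ * z t ≤ (t : ℝ) ^ τ₀ * (M / (t : ℝ) ^ β) :=
          mul_le_mul_of_nonneg_left this htτ₀
      _ = M * ((t : ℝ) ^ τ₀ / (t : ℝ) ^ β) := by ring
end
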